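/- Define D̂ = λ(Σ12² + Σ13²) + 2Σ12Σ13 and Z2 = A⁴N²G+⁵D̂² / ((1−V²)^{5(2−γ)/2}·Ω⁵). At any point of a solution of the tilted Bianchi type VI_{-1/9} system satisfying the constraints with Ω > 0, V < 1, A ≠ 0, N ≠ 0 and D̂ ≠ 0, one has Z2 > 0 and 3 − 2A v1 > 0 (using A² ≤ 1 from constraint (C1) and |v1| ≤ V < 1); consequently Z2 is strictly monotonically decreasing along the solution if 0 < γ < 6/5 and strictly monotonically increasing if 6/5 < γ < 2. -/

import Mathlib

noncomputable section

namespace BianchiVI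

/-- squared tilt speed `V² = v1² + v2² + v3²`. -/
def Vsq (v1 v2 v3 : ℝ) : ℝ := v1^2 + v2^2 + v3^2

/-- `G₊ = 1 + (γ-1) V²`. -/
def Gp (γ v1 v2 v3 : ℝ) : ℝ := 1 + (γ - 1) * Vsq v1 v2 v3

/-- total shear `Σ²`. -/
def Sig2 (sp sm s12 s13 s23 : ℝ) : ℝ := sp^2 + sm^2 + s12^2 + s13^2 + s23^2

/-- deceleration parameter `q`. -/
def qdef (γ sp sm s12 s13 s23 Om v1 v2 v3 : ℝ) : ℝ :=
  2 * Sig2 sp sm s12 s13 s23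
    + (1/2) * ((3*γ - 2) + (2 - γ) * Vsq v1 v2 v3) * Om / Gp γ v1 v2 v3

/-- `P = Σ_{ab} v^a v^b · V²`, so that `S = P/V²`. -/
def Pdef (sp sm s12 s13 s23 v1 v2 v3 : ℝ) : ℝ :=
  -2*sp*v1^2 + (sp + Real.sqrt 3 * sm) * v2^2 + (sp - Real.sqrt 3 * sm) * v3^2
    + 2*Real.sqrt 3*(s12*v1*v2 + s13*v1*v3 + s23*v2*v3)

/-- `S = Σ_{ab} c^a c^b`. -/
def Sdef (sp sm s12 s13 s23 v1 v2 v3 : ℝ) : ℝ :=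
  if 0 < Vsq v1 v2 v3 then Pdef sp sm s12 s13 s23 v1 v2 v3 / Vsq v1 v2 v3 else 0

/-- the quantity `T`. -/
def Tdef (γ sp sm s12 s13 s23 A v1 v2 v3 : ℝ) : ℝ :=
  (((3*γ - 4) - 2*(γ-1)*A*v1) * (1 - Vsq v1 v2 v3)
      + (2 - γ) * Pdef sp sm s12 s13 s23 v1 v2 v3)
    / (1 - (γ - 1) * Vsq v1 v2 v3)

/-- right-hand side of the evolution equation. -/
def rhsSp (γ sp sm s12 s13 s23 N lam A Om v1 v2 v3 : ℝ) : ℝ :=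
  (qdef γ sp sm s12 s13 s23 Om v1 v2 v3 - 2) * sp + 3*(s12^2 + s13^2) - 2*N^2 + (γ*Om/(2*(Gp γ v1 v2 v3))) * (-2*v1^2 + v2^2 + v3^2)

/-- right-hand side of the evolution equation. -/
def rhsSm (γ sp sm s12 s13 s23 N lam A Om v1 v2 v3 : ℝ) : ℝ :=
  (qdef γ sp sm s12 s13 s23 Om v1 v2 v3 - 2 - 2*Real.sqrt 3*s23*lam) * sm + Real.sqrt 3*(s12^2 - s13^2) + 2*A*N + (Real.sqrt 3*γ*Om/(2*(Gp γ v1 v2 v3))) * (v2^2 - v3^2)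

/-- right-hand side of the evolution equation. -/
def rhsS12 (γ sp sm s12 s13 s23 N lam A Om v1 v2 v3 : ℝ) : ℝ :=
  (qdef γ sp sm s12 s13 s23 Om v1 v2 v3 - 2 - 3*sp - Real.sqrt 3*sm) * s12 - Real.sqrt 3*(s23 + sm*lam)*s13 + (Real.sqrt 3*γ*Om/(Gp γ v1 v2 v3))*v1*v2

/-- right-hand side of the evolution equation. -/
def rhsS13 (γ sp sm s12 s13 s23 N lam A Om v1 v2 v3 : ℝ) : ℝ :=
  (qdef γ sp sm s12 s13 s23 Om v1 v2 v3 - 2 - 3*sp + Real.sqrt 3*sm) * s13 - Real.sqrt 3*(s23 - sm*lam)*s12 + (Real.sqrt 3*γ*Om/(Gp γ v1 v2 v3))*v1*v3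

/-- right-hand side of the evolution equation. -/
def rhsS23 (γ sp sm s12 s13 s23 N lam A Om v1 v2 v3 : ℝ) : ℝ :=
  (qdef γ sp sm s12 s13 s23 Om v1 v2 v3 - 2) * s23 - 2*Real.sqrt 3*N^2*lam + 2*Real.sqrt 3*lam*sm^2 + 2*Real.sqrt 3*s12*s13 + (Real.sqrt 3*γ*Om/(Gp γ v1 v2 v3))*v2*v3

/-- right-hand side of the evolution equation. -/
def rhsN (γ sp sm s12 s13 s23 N lam A Om v1 v2 v3 : ℝ) : ℝ :=
  (qdef γ sp sm s12 s13 s23 Om v1 v2 v3 + 2*sp + 2*Real.sqrt 3*s23*lam) * N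

/-- right-hand side of the evolution equation. -/
def rhsLam (γ sp sm s12 s13 s23 N lam A Om v1 v2 v3 : ℝ) : ℝ :=
  2*Real.sqrt 3*s23*(1 - lam^2)

/-- right-hand side of the evolution equation. -/
def rhsA (γ sp sm s12 s13 s23 N lam A Om v1 v2 v3 : ℝ) : ℝ :=
  (qdef γ sp sm s12 s13 s23 Om v1 v2 v3 + 2*sp) * A

/-- right-hand side of the evolution equation. -/
def rhsOm (γ sp sm s12 s13 s23 N lam A Om v1 v2 v3 : ℝ) : ℝ :=
  (Om/(Gp γ v1 v2 v3)) * (2*(qdef γ sp sm s12 s13 s23 Om v1 v2 v3) - (3*γ-2) + 2*γ*A*v1 + (2*(qdef γ sp sm s12 s13 s23 Om v1 v2 v3)*(γ-1) - (2-γ)) * Vsq v1 v2 v3 - γ*(Pdef sp sm s12 s13 s23 v1 v2 v3))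

/-- right-hand side of the evolution equation. -/
def rhsV1 (γ sp sm s12 s13 s23 N lam A Om v1 v2 v3 : ℝ) : ℝ :=
  ((Tdef γ sp sm s12 s13 s23 A v1 v2 v3) + 2*sp)*v1 - 2*Real.sqrt 3*s13*v3 - 2*Real.sqrt 3*s12*v2 - A*(v2^2 + v3^2) - Real.sqrt 3*N*(v2^2 - v3^2)

/-- right-hand side of the evolution equation. -/
def rhsV2 (γ sp sm s12 s13 s23 N lam A Om v1 v2 v3 : ℝ) : ℝ :=
  ((Tdef γ sp sm s12 s13 s23 A v1 v2 v3) - sp - Real.sqrt 3*sm)*v2 - Real.sqrt 3*(s23 + sm*lam)*v3 + Real.sqrt 3*lam*N*v1*v3 + (A + Real.sqrt 3*N)*v1*v2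

/-- right-hand side of the evolution equation. -/
def rhsV3 (γ sp sm s12 s13 s23 N lam A Om v1 v2 v3 : ℝ) : ℝ :=
  ((Tdef γ sp sm s12 s13 s23 A v1 v2 v3) - sp + Real.sqrt 3*sm)*v3 - Real.sqrt 3*(s23 - sm*lam)*v2 - Real.sqrt 3*lam*N*v1*v2 + (A - Real.sqrt 3*N)*v1*v3

/-- the five constraint equations (C1)-(C5). -/
def SatisfiesConstraints (γ sp sm s12 s13 s23 N lam A Om v1 v2 v3 : ℝ) : Prop :=
  Sig2 sp sm s12 s13 s23 + A^2 + N^2 + Om = 1 ∧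
  2*sp*A + 2*sm*N + γ*Om*v1/(Gp γ v1 v2 v3) = 0 ∧
  -(s12*(N + Real.sqrt 3*A) + s13*lam*N) + γ*Om*v2/(Gp γ v1 v2 v3) = 0 ∧
  s13*(N - Real.sqrt 3*A) + s12*lam*N + γ*Om*v3/(Gp γ v1 v2 v3) = 0 ∧
  3*A^2 = (1 - lam^2)*N^2

/-- equilibrium point: all twelve right-hand sides vanish. -/
def IsEquilibrium (γ sp sm s12 s13 s23 N lam A Om v1 v2 v3 : ℝ) : Prop :=
  rhsSp γ sp sm s12 s13 s23 N lam A Om v1 v2 v3 = 0 ∧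
  rhsSm γ sp sm s12 s13 s23 N lam A Om v1 v2 v3 = 0 ∧
  rhsS12 γ sp sm s12 s13 s23 N lam A Om v1 v2 v3 = 0 ∧
  rhsS13 γ sp sm s12 s13 s23 N lam A Om v1 v2 v3 = 0 ∧
  rhsS23 γ sp sm s12 s13 s23 N lam A Om v1 v2 v3 = 0 ∧
  rhsN γ sp sm s12 s13 s23 N lam A Om v1 v2 v3 = 0 ∧
  rhsLam γ sp sm s12 s13 s23 N lam A Om v1 v2 v3 = 0 ∧
  rhsA γ sp sm s12 s13 s23 N lam A Om v1 v2 v3 = 0 ∧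
  rhsOm γ sp sm s12 s13 s23 N lam A Om v1 v2 v3 = 0 ∧
  rhsV1 γ sp sm s12 s13 s23 N lam A Om v1 v2 v3 = 0 ∧
  rhsV2 γ sp sm s12 s13 s23 N lam A Om v1 v2 v3 = 0 ∧
  rhsV3 γ sp sm s12 s13 s23 N lam A Om v1 v2 v3 = 0

/-- a solution of the tilted Bianchi type VI_(-1/9) system on the set `dom`:
the twelve evolution equations and the five constraints hold at every `τ ∈ dom`. -/
def IsSolutionOn (γ : ℝ) (dom : Set ℝ) (sp sm s12 s13 s23 N lam A Om v1 v2 v3 : ℝ → ℝ) : Prop :=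
  ∀ τ ∈ dom,
    (HasDerivAt sp (rhsSp γ (sp τ) (sm τ) (s12 τ) (s13 τ) (s23 τ) (N τ) (lam τ) (A τ) (Om τ) (v1 τ) (v2 τ) (v3 τ)) τ ∧
    HasDerivAt sm (rhsSm γ (sp τ) (sm τ) (s12 τ) (s13 τ) (s23 τ) (N τ) (lam τ) (A τ) (Om τ) (v1 τ) (v2 τ) (v3 τ)) τ ∧
    HasDerivAt s12 (rhsS12 γ (sp τ) (sm τ) (s12 τ) (s13 τ) (s23 τ) (N τ) (lam τ) (A τ) (Om τ) (v1 τ) (v2 τ) (v3 τ)) τ ∧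
    HasDerivAt s13 (rhsS13 γ (sp τ) (sm τ) (s12 τ) (s13 τ) (s23 τ) (N τ) (lam τ) (A τ) (Om τ) (v1 τ) (v2 τ) (v3 τ)) τ ∧
    HasDerivAt s23 (rhsS23 γ (sp τ) (sm τ) (s12 τ) (s13 τ) (s23 τ) (N τ) (lam τ) (A τ) (Om τ) (v1 τ) (v2 τ) (v3 τ)) τ ∧
    HasDerivAt N (rhsN γ (sp τ) (sm τ) (s12 τ) (s13 τ) (s23 τ) (N τ) (lam τ) (A τ) (Om τ) (v1 τ) (v2 τ) (v3 τ)) τ ∧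
    HasDerivAt lam (rhsLam γ (sp τ) (sm τ) (s12 τ) (s13 τ) (s23 τ) (N τ) (lam τ) (A τ) (Om τ) (v1 τ) (v2 τ) (v3 τ)) τ ∧
    HasDerivAt A (rhsA γ (sp τ) (sm τ) (s12 τ) (s13 τ) (s23 τ) (N τ) (lam τ) (A τ) (Om τ) (v1 τ) (v2 τ) (v3 τ)) τ ∧
    HasDerivAt Om (rhsOm γ (sp τ) (sm τ) (s12 τ) (s13 τ) (s23 τ) (N τ) (lam τ) (A τ) (Om τ) (v1 τ) (v2 τ) (v3 τ)) τ ∧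
    HasDerivAt v1 (rhsV1 γ (sp τ) (sm τ) (s12 τ) (s13 τ) (s23 τ) (N τ) (lam τ) (A τ) (Om τ) (v1 τ) (v2 τ) (v3 τ)) τ ∧
    HasDerivAt v2 (rhsV2 γ (sp τ) (sm τ) (s12 τ) (s13 τ) (s23 τ) (N τ) (lam τ) (A τ) (Om τ) (v1 τ) (v2 τ) (v3 τ)) τ ∧
    HasDerivAt v3 (rhsV3 γ (sp τ) (sm τ) (s12 τ) (s13 τ) (s23 τ) (N τ) (lam τ) (A τ) (Om τ) (v1 τ) (v2 τ) (v3 τ)) τ) ∧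
    SatisfiesConstraints γ (sp τ) (sm τ) (s12 τ) (s13 τ) (s23 τ) (N τ) (lam τ) (A τ) (Om τ) (v1 τ) (v2 τ) (v3 τ)

/-- `D̂ = λ(Σ12² + Σ13²) + 2 Σ12 Σ13`. -/
def Dhat (lam s12 s13 : ℝ) : ℝ := lam*(s12^2 + s13^2) + 2*s12*s13

/-- the monotone function `Z2`. -/
def Z2fun (γ : ℝ) (s12 s13 N lam A Om v1 v2 v3 : ℝ → ℝ) : ℝ → ℝ := fun τ =>
  (A τ)^4 * (N τ)^2 * (Gp γ (v1 τ) (v2 τ) (v3 τ))^5 * (Dhat (lam τ) (s12 τ) (s13 τ))^2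
    / ((1 - Vsq (v1 τ) (v2 τ) (v3 τ)) ^ ((5*(2-γ)/2 : ℝ)) * (Om τ)^5)

/-!
Logarithmic differentiation. Along a solution the evolution equations give the logarithmic
derivatives of `A`, `N` and `Ω` directly, and the constraints (C3), (C4) remove the tilt
terms from the evolution of `D̂`, so that `D̂'/D̂ = 2(q - 2 - 3Σ₊ + 3Av₁) - 2√3 Σ₂₃ λ`. In the
weighted sum of the logarithmic derivatives of the factors of `Z2`, the terms in `q`, `Σ₊`,
`Σ₂₃λ` and `P` cancel, leaving `Z2' = (5γ - 6)(3 - 2Av₁) Z2`. As `Z2 > 0` and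
`3 - 2Av₁ > 0`, the sign of `Z2'` is that of `5γ - 6`.
-/

theorem _root_.HasDerivAt.mul_logDeriv {f g : ℝ → ℝ} {a b x : ℝ}
    (hf : HasDerivAt f (f x * a) x) (hg : HasDerivAt g (g x * b) x) :
    HasDerivAt (fun t => f t * g t) (f x * g x * (a + b)) x :=
  (hf.fun_mul hg).congr_deriv (by ring)

theorem _root_.HasDerivAt.pow_logDeriv {f : ℝ → ℝ} {a x : ℝ}
    (hf : HasDerivAt f (f x * a) x) (n : ℕ) :
    HasDerivAt (fun t => f t ^ n) (f x ^ n * (n * a)) x := by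
  refine (hf.fun_pow n).congr_deriv ?_
  cases n with
  | zero => simp
  | succ n => rw [Nat.add_sub_cancel, pow_succ]; ring

theorem _root_.HasDerivAt.div_logDeriv {f g : ℝ → ℝ} {a b x : ℝ}
    (hf : HasDerivAt f (f x * a) x) (hg : HasDerivAt g (g x * b) x) (hx : g x ≠ 0) :
    HasDerivAt (fun t => f t / g t) (f x / g x * (a - b)) x := by
  refine (hf.fun_div hg hx).congr_deriv ?_
  field_simp

theorem _root_.HasDerivAt.rpow_logDeriv {f : ℝ → ℝ} {a x : ℝ}
    (hf : HasDerivAt f (f x * a) x) (hx : 0 < f x) (p : ℝ) :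
    HasDerivAt (fun t => f t ^ p) (f x ^ p * (p * a)) x := by
  refine (hf.rpow_const (p := p) (Or.inl hx.ne')).congr_deriv ?_
  rw [Real.rpow_sub hx, Real.rpow_one]
  field_simp

theorem Vsq_nonneg (v1 v2 v3 : ℝ) : 0 ≤ Vsq v1 v2 v3 := by
  unfold Vsq
  positivity

theorem sq_le_Vsq (v1 v2 v3 : ℝ) : v1 ^ 2 ≤ Vsq v1 v2 v3 := by
  unfold Vsq
  nlinarith [sq_nonneg v2, sq_nonneg v3]

theorem Vsq_lt_one {v1 v2 v3 : ℝ} (h : √(Vsq v1 v2 v3) < 1) : Vsq v1 v2 v3 < 1 := by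
  simpa using (Real.sqrt_lt' one_pos).1 h

theorem Gp_pos {γ v1 v2 v3 : ℝ} (hγ : 0 ≤ γ) (hV : Vsq v1 v2 v3 < 1) : 0 < Gp γ v1 v2 v3 := by
  unfold Gp
  nlinarith [Vsq_nonneg v1 v2 v3]

theorem one_sub_mul_Vsq_pos {γ v1 v2 v3 : ℝ} (hγ : γ ≤ 2) (hV : Vsq v1 v2 v3 < 1) :
    0 < 1 - (γ - 1) * Vsq v1 v2 v3 := by
  nlinarith [Vsq_nonneg v1 v2 v3]

theorem SatisfiesConstraints.sq_A_le_one {γ sp sm s12 s13 s23 N lam A Om v1 v2 v3 : ℝ}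
    (hc : SatisfiesConstraints γ sp sm s12 s13 s23 N lam A Om v1 v2 v3) (hOm : 0 ≤ Om) :
    A ^ 2 ≤ 1 := by
  have : 0 ≤ Sig2 sp sm s12 s13 s23 := by unfold Sig2; positivity
  nlinarith [hc.1, sq_nonneg N]

theorem three_sub_two_mul_pos {a u : ℝ} (ha : a ^ 2 ≤ 1) (hu : u ^ 2 < 1) : 0 < 3 - 2 * a * u := by
  nlinarith [sq_nonneg (a - u)]

section Solution

variable {γ : ℝ} {dom : Set ℝ} {sp sm s12 s13 s23 N lam A Om v1 v2 v3 : ℝ → ℝ} {τ : ℝ}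

local notation "𝐪" => qdef γ (sp τ) (sm τ) (s12 τ) (s13 τ) (s23 τ) (Om τ) (v1 τ) (v2 τ) (v3 τ)
local notation "𝐏" => Pdef (sp τ) (sm τ) (s12 τ) (s13 τ) (s23 τ) (v1 τ) (v2 τ) (v3 τ)
local notation "𝐕²" => Vsq (v1 τ) (v2 τ) (v3 τ)
local notation "𝐆" => Gp γ (v1 τ) (v2 τ) (v3 τ)

theorem IsSolutionOn.hasDerivAt_A (hsol : IsSolutionOn γ dom sp sm s12 s13 s23 N lam A Om v1 v2 v3)
    (hτ : τ ∈ dom) : HasDerivAt A (A τ * (𝐪 + 2 * sp τ)) τ :=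
  (hsol τ hτ).1.2.2.2.2.2.2.2.1.congr_deriv (mul_comm _ _)

theorem IsSolutionOn.hasDerivAt_N (hsol : IsSolutionOn γ dom sp sm s12 s13 s23 N lam A Om v1 v2 v3)
    (hτ : τ ∈ dom) : HasDerivAt N (N τ * (𝐪 + 2 * sp τ + 2 * √3 * s23 τ * lam τ)) τ :=
  (hsol τ hτ).1.2.2.2.2.2.1.congr_deriv (mul_comm _ _)

theorem IsSolutionOn.hasDerivAt_Om (hsol : IsSolutionOn γ dom sp sm s12 s13 s23 N lam A Om v1 v2 v3)
    (hτ : τ ∈ dom) :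
    HasDerivAt Om (Om τ * ((2 * 𝐪 - (3 * γ - 2) + 2 * γ * A τ * v1 τ
      + (2 * 𝐪 * (γ - 1) - (2 - γ)) * 𝐕² - γ * 𝐏) / 𝐆)) τ :=
  (hsol τ hτ).1.2.2.2.2.2.2.2.2.1.congr_deriv (by rw [rhsOm]; ring)

theorem IsSolutionOn.hasDerivAt_Vsq
    (hsol : IsSolutionOn γ dom sp sm s12 s13 s23 N lam A Om v1 v2 v3)
    (hτ : τ ∈ dom) (hT : 1 - (γ - 1) * 𝐕² ≠ 0) :
    HasDerivAt (fun t => Vsq (v1 t) (v2 t) (v3 t))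
      (2 * (1 - 𝐕²) * ((3 * γ - 4 - 2 * (γ - 1) * A τ * v1 τ) * 𝐕² - 𝐏) /
        (1 - (γ - 1) * 𝐕²)) τ := by
  obtain ⟨⟨-, -, -, -, -, -, -, -, -, h1, h2, h3⟩, -⟩ := hsol τ hτ
  refine (((h1.fun_pow 2).fun_add (h2.fun_pow 2)).fun_add (h3.fun_pow 2)).congr_deriv ?_
  simp only [rhsV1, rhsV2, rhsV3, Tdef, Pdef, Vsq] at hT ⊢
  field_simp
  ring

theorem IsSolutionOn.hasDerivAt_Dhat
    (hsol : IsSolutionOn γ dom sp sm s12 s13 s23 N lam A Om v1 v2 v3)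
    (hτ : τ ∈ dom) :
    HasDerivAt (fun t => Dhat (lam t) (s12 t) (s13 t)) (Dhat (lam τ) (s12 τ) (s13 τ) *
      (2 * (𝐪 - 2 - 3 * sp τ + 3 * A τ * v1 τ) - 2 * √3 * s23 τ * lam τ)) τ := by
  obtain ⟨⟨-, -, h12, h13, -, -, hlam, -⟩, -, -, hc3, hc4, -⟩ := hsol τ hτ
  refine ((hlam.fun_mul ((h12.fun_pow 2).fun_add (h13.fun_pow 2))).fun_add
    ((h12.const_mul 2).fun_mul h13)).congr_deriv ?_
  simp only [rhsLam, rhsS12, rhsS13, Dhat]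
  linear_combination (2 * √3 * v1 τ * (lam τ * s12 τ + s13 τ)) * hc3
    + (2 * √3 * v1 τ * (lam τ * s13 τ + s12 τ)) * hc4
    + (2 * A τ * v1 τ * (lam τ * (s12 τ ^ 2 + s13 τ ^ 2) + 2 * s12 τ * s13 τ))
      * Real.sq_sqrt (show (0 : ℝ) ≤ 3 by norm_num)

theorem IsSolutionOn.hasDerivAt_Z2fun
    (hsol : IsSolutionOn γ dom sp sm s12 s13 s23 N lam A Om v1 v2 v3) (hτ : τ ∈ dom)
    (hγ : 0 < γ ∧ γ < 2) (hOm : 0 < Om τ) (hV : 𝐕² < 1) :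
    HasDerivAt (Z2fun γ s12 s13 N lam A Om v1 v2 v3)
      (Z2fun γ s12 s13 N lam A Om v1 v2 v3 τ * ((5 * γ - 6) * (3 - 2 * A τ * v1 τ))) τ := by
  have hG : 0 < 𝐆 := Gp_pos hγ.1.le hV
  have hGd : 0 < 1 - (γ - 1) * 𝐕² := one_sub_mul_Vsq_pos hγ.2.le hV
  have hW : 0 < 1 - 𝐕² := sub_pos.2 hV
  have hVsq := hsol.hasDerivAt_Vsq hτ hGd.ne'
  set dV := 2 * (1 - 𝐕²) * ((3 * γ - 4 - 2 * (γ - 1) * A τ * v1 τ) * 𝐕² - 𝐏) /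
    (1 - (γ - 1) * 𝐕²) with hdV
  have hGp : HasDerivAt (fun t => Gp γ (v1 t) (v2 t) (v3 t)) (𝐆 * ((γ - 1) * dV / 𝐆)) τ :=
    ((hVsq.const_mul (γ - 1)).const_add 1).congr_deriv (by field_simp)
  have hW' : HasDerivAt (fun t => 1 - Vsq (v1 t) (v2 t) (v3 t)) ((1 - 𝐕²) * (-dV / (1 - 𝐕²))) τ :=
    (hVsq.const_sub 1).congr_deriv (by field_simp)
  have hnum := ((((hsol.hasDerivAt_A hτ).pow_logDeriv 4).mul_logDeriv
    ((hsol.hasDerivAt_N hτ).pow_logDeriv 2)).mul_logDeriv (hGp.pow_logDeriv 5)).mul_logDeriv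
    ((hsol.hasDerivAt_Dhat hτ).pow_logDeriv 2)
  have hden := (hW'.rpow_logDeriv hW (5 * (2 - γ) / 2)).mul_logDeriv
    ((hsol.hasDerivAt_Om hτ).pow_logDeriv 5)
  refine (hnum.div_logDeriv hden (by positivity)).congr_deriv (congrArg _ ?_)
  rw [hdV]
  -- `(V²)'` carries the factor `1 / (1 - (γ - 1)V²)`; with the exponent `5(2 - γ)/2` its
  -- contributions through `G₊⁵` and through `(1 - V²)^(5(2-γ)/2)` combine to cancel it.
  simp only [Gp] at hG ⊢
  field_simp
  ring

theorem Z2fun_pos (hγ : 0 ≤ γ) (hOm : 0 < Om τ) (hV : 𝐕² < 1) (hA : A τ ≠ 0) (hN : N τ ≠ 0)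
    (hD : Dhat (lam τ) (s12 τ) (s13 τ) ≠ 0) : 0 < Z2fun γ s12 s13 N lam A Om v1 v2 v3 τ := by
  have hG : 0 < 𝐆 := Gp_pos hγ hV
  have hW : 0 < (1 - 𝐕²) ^ (5 * (2 - γ) / 2 : ℝ) := Real.rpow_pos_of_pos (sub_pos.2 hV) _
  unfold Z2fun
  positivity

end Solution

theorem Z2_monotone (γ : ℝ) (hγ : 0 < γ ∧ γ < 2)
    (sp sm s12 s13 s23 N lam A Om v1 v2 v3 : ℝ → ℝ)
    (hsol : IsSolutionOn γ Set.univ sp sm s12 s13 s23 N lam A Om v1 v2 v3)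
    (hOm : ∀ τ : ℝ, 0 < Om τ)
    (hV : ∀ τ : ℝ, Real.sqrt (Vsq (v1 τ) (v2 τ) (v3 τ)) < 1)
    (hA : ∀ τ : ℝ, A τ ≠ 0) (hN : ∀ τ : ℝ, N τ ≠ 0)
    (hD : ∀ τ : ℝ, Dhat (lam τ) (s12 τ) (s13 τ) ≠ 0) :
    (∀ τ : ℝ, 0 < Z2fun γ s12 s13 N lam A Om v1 v2 v3 τ ∧ 0 < 3 - 2*(A τ)*(v1 τ)) ∧
    (γ < 6/5 → StrictAnti (Z2fun γ s12 s13 N lam A Om v1 v2 v3)) ∧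
    (6/5 < γ → StrictMono (Z2fun γ s12 s13 N lam A Om v1 v2 v3)) := by
  have hVsq τ : Vsq (v1 τ) (v2 τ) (v3 τ) < 1 := Vsq_lt_one (hV τ)
  have hpos τ : 0 < Z2fun γ s12 s13 N lam A Om v1 v2 v3 τ ∧ 0 < 3 - 2 * A τ * v1 τ :=
    ⟨Z2fun_pos hγ.1.le (hOm τ) (hVsq τ) (hA τ) (hN τ) (hD τ),
      three_sub_two_mul_pos ((hsol τ (Set.mem_univ τ)).2.sq_A_le_one (hOm τ).le)
        ((sq_le_Vsq _ _ _).trans_lt (hVsq τ))⟩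
  have hderiv τ := hsol.hasDerivAt_Z2fun (Set.mem_univ τ) hγ (hOm τ) (hVsq τ)
  refine ⟨hpos, fun hγ65 => strictAnti_of_hasDerivAt_neg hderiv fun τ => ?_,
    fun hγ65 => strictMono_of_hasDerivAt_pos hderiv fun τ => ?_⟩
  · exact mul_neg_of_pos_of_neg (hpos τ).1 (mul_neg_of_neg_of_pos (by linarith) (hpos τ).2)
  · exact mul_pos (hpos τ).1 (mul_pos (by linarith) (hpos τ).2)

end BianchiVI
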